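/- arXiv:2209.12882 — 2 statements merged into one kernel-verified Lean document; each statement's English description precedes it below -/
import Mathlib

section
/- Let w ∈ ℝ^d be nonzero and let ŵ be its random sketch (choose index i with probability p_i = w_i²/(2‖w‖²) + 1/(2d), set ŵ = (⌊w_i/p_i⌋ + b)·e_i with b Bernoulli of parameter w_i/p_i − ⌊w_i/p_i⌋). Then for every unit vector u ∈ ℝ^d, E[⟨u, ŵ⟩²] ≤ 1/4 + 2‖w‖². -/
open Finset

/-- Probability of choosing index `i` in the random sketch of `w`. -/
noncomputable def sketchP {d : ℕ} (w : Fin d → ℝ) (i : Fin d) : ℝ :=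
  w i ^ 2 / (2 * ∑ j, w j ^ 2) + 1 / (2 * d)

/-- Probability mass of the outcome `(i, b)` of the random sketch. -/
noncomputable def sketchMass {d : ℕ} (w : Fin d → ℝ) (x : Fin d × Bool) : ℝ :=
  sketchP w x.1 *
    (if x.2 then w x.1 / sketchP w x.1 - ⌊w x.1 / sketchP w x.1⌋
     else 1 - (w x.1 / sketchP w x.1 - ⌊w x.1 / sketchP w x.1⌋))

/-- The value `(⌊w_i/p_i⌋ + b) • e_i` of the random sketch at outcome `(i, b)`. -/
noncomputable def sketchVal {d : ℕ} (w : Fin d → ℝ) (x : Fin d × Bool) : Fin d → ℝ :=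
  fun j => if j = x.1 then (⌊w x.1 / sketchP w x.1⌋ : ℝ) + (if x.2 then 1 else 0) else 0

/-! Given the index `i`, `⟨u, ŵ⟩ = u i * (⌊x⌋ + b)` with `x = w i / p i` and `b` Bernoulli of
parameter `fract x`, whose second moment is `x ^ 2 + fract x * (1 - fract x) ≤ x ^ 2 + 1 / 4`.
Weighting by `p i` gives `w i ^ 2 / p i + p i / 4 ≤ 2 ‖w‖² + 1 / 4`, because
`p i ≥ w i ^ 2 / (2 ‖w‖²)` and `p i ≤ 1`; averaging against the weights `u i ^ 2`, which sum
to `1`, gives the bound. -/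

theorem fract_mul_one_sub_fract_le {K : Type*} [Field K] [LinearOrder K] [IsStrictOrderedRing K]
    [FloorRing K] (x : K) : Int.fract x * (1 - Int.fract x) ≤ 1 / 4 := by
  nlinarith [sq_nonneg (Int.fract x - 1 / 2)]

theorem one_sub_fract_mul_floor_sq_add_fract_mul_floor_add_one_sq {R : Type*} [CommRing R]
    [LinearOrder R] [FloorRing R] (x : R) :
    (1 - Int.fract x) * (⌊x⌋ : R) ^ 2 + Int.fract x * ((⌊x⌋ : R) + 1) ^ 2 =
      x ^ 2 + Int.fract x * (1 - Int.fract x) := by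
  rw [← Int.self_sub_floor]
  ring

section Sketch

variable {d : ℕ} (w : Fin d → ℝ)

theorem sketchP_pos (i : Fin d) : 0 < sketchP w i := by
  have hd : (0 : ℝ) < d := by exact_mod_cast i.pos
  unfold sketchP
  positivity

theorem sketchP_le_one (i : Fin d) : sketchP w i ≤ 1 := by
  have hd : (1 : ℝ) ≤ d := by exact_mod_cast i.pos
  have hwi : w i ^ 2 ≤ ∑ j, w j ^ 2 := single_le_sum (fun j _ => sq_nonneg (w j)) (mem_univ i)
  have h₁ : w i ^ 2 / (2 * ∑ j, w j ^ 2) ≤ 1 / 2 :=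
    div_le_of_le_mul₀ (by positivity) (by norm_num) (by linarith)
  have h₂ : 1 / (2 * (d : ℝ)) ≤ 1 / 2 := one_div_le_one_div_of_le (by norm_num) (by linarith)
  unfold sketchP
  linarith

theorem sq_div_sketchP_le (i : Fin d) : w i ^ 2 / sketchP w i ≤ 2 * ∑ j, w j ^ 2 := by
  refine div_le_of_le_mul₀ (sketchP_pos w i).le (by positivity) ?_
  rcases (sum_nonneg fun j _ => sq_nonneg (w j) : 0 ≤ ∑ j, w j ^ 2).eq_or_lt with hS | hS
  · -- `w = 0`: `sketchP` divides by zero, but every `w i` vanishes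
    have hwi : w i = 0 := by
      simpa using (sum_eq_zero_iff_of_nonneg fun j _ => sq_nonneg (w j)).mp hS.symm i (mem_univ i)
    simp [hwi, ← hS]
  · have hd : (0 : ℝ) < d := by exact_mod_cast i.pos
    calc w i ^ 2 = 2 * (∑ j, w j ^ 2) * (w i ^ 2 / (2 * ∑ j, w j ^ 2)) := by field_simp
      _ ≤ 2 * (∑ j, w j ^ 2) * sketchP w i := by
        unfold sketchP
        gcongr
        exact le_add_of_nonneg_right (by positivity)

theorem sum_mul_sketchVal (u : Fin d → ℝ) (x : Fin d × Bool) :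
    ∑ j, u j * sketchVal w x j =
      u x.1 * ((⌊w x.1 / sketchP w x.1⌋ : ℝ) + if x.2 then 1 else 0) := by
  simp [sketchVal]

theorem sum_sketchMass_mul_sq (i : Fin d) :
    ∑ b, sketchMass w (i, b) * ((⌊w i / sketchP w i⌋ : ℝ) + if b then 1 else 0) ^ 2 =
      w i ^ 2 / sketchP w i +
        sketchP w i * (Int.fract (w i / sketchP w i) * (1 - Int.fract (w i / sketchP w i))) := by
  have hp := (sketchP_pos w i).ne'
  simp only [Fintype.sum_bool, sketchMass, Int.self_sub_floor, if_true, if_false,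
    Bool.false_eq_true, add_zero]
  calc _ = sketchP w i * ((1 - Int.fract (w i / sketchP w i)) * (⌊w i / sketchP w i⌋ : ℝ) ^ 2 +
        Int.fract (w i / sketchP w i) * ((⌊w i / sketchP w i⌋ : ℝ) + 1) ^ 2) := by ring
    _ = sketchP w i * ((w i / sketchP w i) ^ 2 +
        Int.fract (w i / sketchP w i) * (1 - Int.fract (w i / sketchP w i))) := by
      rw [one_sub_fract_mul_floor_sq_add_fract_mul_floor_add_one_sq]
    _ = _ := by field_simp

theorem sum_sketchMass_mul_sq_le (i : Fin d) :
    ∑ b, sketchMass w (i, b) * ((⌊w i / sketchP w i⌋ : ℝ) + if b then 1 else 0) ^ 2 ≤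
      2 * (∑ j, w j ^ 2) + 1 / 4 := by
  rw [sum_sketchMass_mul_sq]
  gcongr
  · exact sq_div_sketchP_le w i
  · refine (mul_le_of_le_one_left ?_ (sketchP_le_one w i)).trans (fract_mul_one_sub_fract_le _)
    exact mul_nonneg (Int.fract_nonneg _) (sub_nonneg.mpr (Int.fract_lt_one _).le)

end Sketch

theorem sketch_second_moment_general {d : ℕ} (w : Fin d → ℝ)
    (u : Fin d → ℝ) (hu : ∑ j, u j ^ 2 = 1) :
    ∑ x : Fin d × Bool, sketchMass w x * (∑ j, u j * sketchVal w x j) ^ 2 ≤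
      1 / 4 + 2 * ∑ j, w j ^ 2 := by
  rw [Fintype.sum_prod_type]
  calc ∑ i, ∑ b, sketchMass w (i, b) * (∑ j, u j * sketchVal w (i, b) j) ^ 2
      = ∑ i, u i ^ 2 * ∑ b, sketchMass w (i, b) *
          ((⌊w i / sketchP w i⌋ : ℝ) + if b then 1 else 0) ^ 2 := by
        simp only [sum_mul_sketchVal, mul_pow, mul_sum, mul_left_comm]
    _ ≤ ∑ i, u i ^ 2 * (2 * (∑ j, w j ^ 2) + 1 / 4) := by
        gcongr with i
        exact sum_sketchMass_mul_sq_le w i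
    _ = 1 / 4 + 2 * ∑ j, w j ^ 2 := by rw [← sum_mul, hu]; ring

/-- Second moment bound for the random sketch:
for every unit vector `u`, `E[⟨u, ŵ⟩²] ≤ 1/4 + 2‖w‖²`. -/
theorem sketch_second_moment {d : ℕ} (hd : 0 < d) (w : Fin d → ℝ) (hw : w ≠ 0)
    (u : Fin d → ℝ) (hu : ∑ j, u j ^ 2 = 1) :
    ∑ x : Fin d × Bool, sketchMass w x * (∑ j, u j * sketchVal w x j) ^ 2 ≤
      1 / 4 + 2 * ∑ j, w j ^ 2 :=
  sketch_second_moment_general w u hu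
end

section
/- Let H ⊂ {0,1}^X be a class with VC dimension d. Then for every finite A ⊆ X with |A| = m and every ε ∈ (0,1], there is a set H̃ of functions A → [0,1] of size at most 2^{O(d/ε)} such that every h ∈ H has some h̃ ∈ H̃ with (1/m)Σ_{x∈A}(h(x) − h̃(x))² ≤ ε². (Haussler's packing/covering bound: log N(H, m, ε) = O(d/ε).) -/
open Finset

/-- `H` shatters the finset `S`. -/
def ShattersSet {X : Type} (H : Set (X → Bool)) (S : Finset X) : Prop :=
  ∀ f : X → Bool, ∃ h ∈ H, ∀ x ∈ S, h x = f x

/-- `H` has VC dimension at most `d`. -/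
def VCDimLE {X : Type} (H : Set (X → Bool)) (d : ℕ) : Prop :=
  ∀ S : Finset X, ShattersSet H S → S.card ≤ d

lemma fact_le_aux : ∀ (d i : ℕ), i ≤ d → d.factorial ≤ i.factorial * d ^ (d - i) := by
  intro d
  induction d with
  | zero => intro i h; interval_cases i; simp
  | succ n ih =>
    intro i h
    rcases Nat.eq_or_lt_of_le h with he | hlt
    · subst he; simp
    · have hi : i ≤ n := Nat.lt_succ_iff.mp hlt
      calc (n+1).factorial = (n+1) * n.factorial := rfl
        _ ≤ (n+1) * (i.factorial * n ^ (n - i)) := Nat.mul_le_mul_left _ (ih i hi)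
        _ ≤ (n+1) * (i.factorial * (n+1) ^ (n - i)) := by
            exact Nat.mul_le_mul_left _ (Nat.mul_le_mul_left _ (Nat.pow_le_pow_left (Nat.le_succ n) _))
        _ = i.factorial * ((n+1) * (n+1) ^ (n - i)) := by ring
        _ = i.factorial * (n+1) ^ (n - i + 1) := by rw [pow_succ]; ring
        _ = i.factorial * (n+1) ^ (n + 1 - i) := by
            congr 2; omega

-- sum of binomials bound: for d ≤ k, ∑_{i≤d} C(k,i) ≤ (d+1) k^d / d!
lemma sum_choose_le (d k : ℕ) (hdk : d ≤ k) :
    (∑ i ∈ range (d+1), (k.choose i : ℝ)) ≤ (d+1) * k ^ d / d.factorial := by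
  have h1 : ∀ i ∈ range (d+1), (k.choose i : ℝ) ≤ (k:ℝ) ^ d / d.factorial := by
    intro i hi
    have hid : i ≤ d := Nat.lt_succ_iff.mp (mem_range.mp hi)
    calc (k.choose i : ℝ) ≤ (k:ℝ) ^ i / i.factorial := Nat.choose_le_pow_div i k
      _ ≤ (k:ℝ) ^ d / d.factorial := by
        rw [div_le_div_iff₀ (by positivity) (by positivity)]
        have : (k:ℝ) ^ i * ((k:ℝ)^(d-i) * i.factorial) = (k:ℝ)^d * i.factorial := by
          rw [← mul_assoc, ← pow_add]
          congr 2; omega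
        calc (k:ℝ) ^ i * d.factorial ≤ (k:ℝ)^i * (i.factorial * (d:ℝ) ^ (d-i)) := by
              have := fact_le_aux d i hid
              have : (d.factorial : ℝ) ≤ (i.factorial : ℝ) * (d:ℝ) ^ (d-i) := by
                exact_mod_cast this
              exact mul_le_mul_of_nonneg_left this (by positivity)
          _ ≤ (k:ℝ)^i * (i.factorial * (k:ℝ) ^ (d-i)) := by
              have : (d:ℝ)^(d-i) ≤ (k:ℝ)^(d-i) := by
                apply pow_le_pow_left₀ (by positivity) (by exact_mod_cast hdk)
              gcongr
          _ = (k:ℝ)^d * i.factorial := by rw [← this]; ring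
  calc (∑ i ∈ range (d+1), (k.choose i : ℝ)) ≤ ∑ i ∈ range (d+1), (k:ℝ)^d / d.factorial :=
        Finset.sum_le_sum h1
    _ = (d+1) * k ^ d / d.factorial := by
        rw [Finset.sum_const, card_range]; push_cast; ring

lemma exp_le_two_rpow {x : ℝ} (hx : 0 ≤ x) : Real.exp x ≤ (2:ℝ) ^ (2*x) := by
  rw [Real.rpow_def_of_pos (by norm_num : (0:ℝ) < 2)]
  apply Real.exp_le_exp.mpr
  have h2 := Real.log_two_gt_d9
  nlinarith

lemma one_le_two_rpow {y : ℝ} (hy : 0 ≤ y) : (1:ℝ) ≤ (2:ℝ) ^ y :=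
  Real.one_le_rpow (by norm_num) hy 

set_option maxHeartbeats 2000000 in
lemma key_numeric (d N : ℕ) (ε : ℝ) (hε : 0 < ε) (hε1 : ε ≤ 1)
    (hk : ∀ k : ℕ, ((N:ℝ))^2 * (1-ε^2)^k < 1 →
      (N:ℝ) ≤ ∑ i ∈ range (d+1), (k.choose i : ℝ)) :
    (N:ℝ) ≤ 2 ^ ((50:ℝ) * d / ε) := by
  have hCd : (0:ℝ) ≤ 50 * d / ε := by positivity
  rcases le_or_gt (N:ℝ) 1 with hN1 | hN1
  · exact hN1.trans (one_le_two_rpow hCd)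
  -- now N ≥ 2
  have hN0 : (0:ℝ) < N := by linarith
  set L := Real.log N with hLdef
  clear_value L
  have hL0 : 0 < L := hLdef ▸ Real.log_pos hN1
  set k : ℕ := d + ⌈2*L/ε^2⌉₊ + 1 with hkdef
  clear_value k
  have hdk : d ≤ k := by omega
  have hk1 : 1 ≤ k := by omega
  have hε2 : (0:ℝ) < ε^2 := by positivity
  -- step 1 : the smallness condition holds for k
  have hsmall : ((N:ℝ))^2 * (1-ε^2)^k < 1 := by
    have h01 : (0:ℝ) ≤ 1 - ε^2 := by nlinarith
    have hee : (1-ε^2) ≤ Real.exp (-ε^2) := by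
      have := Real.add_one_le_exp (-ε^2); linarith
    have h1 : (1-ε^2)^k ≤ Real.exp (-ε^2) ^ k := pow_le_pow_left₀ h01 hee k
    have h2 : Real.exp (-ε^2) ^ k = Real.exp ((k:ℝ)*(-ε^2)) := (Real.exp_nat_mul _ k).symm
    have h3 : ((N:ℝ))^2 = Real.exp ((2:ℕ)*L) := by
      rw [Real.exp_nat_mul, hLdef, Real.exp_log hN0]
    have hkL : 2*L < (k:ℝ)*ε^2 := by
      have hceil : 2*L/ε^2 ≤ (⌈2*L/ε^2⌉₊ : ℝ) := Nat.le_ceil _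
      have hkge : (⌈2*L/ε^2⌉₊ : ℝ) + 1 ≤ (k:ℝ) := by
        rw [hkdef]; push_cast; linarith [Nat.cast_nonneg (α := ℝ) d]
      have : 2*L ≤ (⌈2*L/ε^2⌉₊ : ℝ) * ε^2 := by
        rw [div_le_iff₀ hε2] at hceil; linarith
      nlinarith
    calc ((N:ℝ))^2 * (1-ε^2)^k ≤ Real.exp ((2:ℕ)*L) * Real.exp ((k:ℝ)*(-ε^2)) := by
          rw [h3]; apply mul_le_mul_of_nonneg_left (h1.trans h2.le) (Real.exp_pos _).le
      _ = Real.exp (2*L + (k:ℝ)*(-ε^2)) := by rw [← Real.exp_add]; norm_num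
      _ < 1 := by rw [Real.exp_lt_one_iff]; nlinarith
  have hN := (hk k hsmall).trans (sum_choose_le d k hdk)
  -- handle d = 0
  rcases Nat.eq_zero_or_pos d with hd0 | hd0
  · subst hd0; simp at hN
    have : (N:ℝ) ≤ 1 := by exact_mod_cast hN
    linarith
  have hd0' : (0:ℝ) < d := by exact_mod_cast hd0
  have hk0' : (0:ℝ) < k := by positivity
  -- step 2 : take logarithms
  have hLle : L ≤ 2*d + d * Real.log ((k:ℝ)/d) := by
    rw [hLdef, Real.log_le_iff_le_exp hN0]
    refine hN.trans ?_
    have e1 : ((d:ℝ)+1) ≤ Real.exp d := by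
      have := Real.add_one_le_exp (d:ℝ); linarith
    have e2 : (k:ℝ)^d = Real.exp ((d:ℝ) * Real.log k) := by
      rw [Real.exp_nat_mul, Real.exp_log hk0']
    have e3 : (1:ℝ)/(d.factorial) ≤ Real.exp ((d:ℝ) - (d:ℝ) * Real.log d) := by
      have hf := Real.pow_div_factorial_le_exp (d:ℝ) (le_of_lt hd0') d
      have hdd : (d:ℝ)^d = Real.exp ((d:ℝ) * Real.log d) := by
        rw [Real.exp_nat_mul, Real.exp_log hd0']
      have hfp : (0:ℝ) < d.factorial := by exact_mod_cast d.factorial_pos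
      rw [hdd, div_le_iff₀ hfp] at hf
      rw [div_le_iff₀ hfp, Real.exp_sub, div_mul_eq_mul_div, le_div_iff₀ (Real.exp_pos _)]
      linarith
    have hfp : (0:ℝ) < d.factorial := by exact_mod_cast d.factorial_pos
    calc ((d:ℝ)+1) * (k:ℝ)^d / d.factorial
        = ((d:ℝ)+1) * (k:ℝ)^d * ((1:ℝ)/d.factorial) := by ring
      _ ≤ Real.exp d * Real.exp ((d:ℝ) * Real.log k) * Real.exp ((d:ℝ) - (d:ℝ) * Real.log d) := by
          apply mul_le_mul
          · rw [e2]; apply mul_le_mul e1 le_rfl (by positivity) (Real.exp_pos _).le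
          · exact e3
          · positivity
          · positivity
      _ = Real.exp ((d:ℝ) + (d:ℝ)*Real.log k + ((d:ℝ) - (d:ℝ)*Real.log d)) := by
          rw [← Real.exp_add, ← Real.exp_add]
      _ = Real.exp (2*d + d * Real.log ((k:ℝ)/d)) := by
          rw [Real.log_div (by positivity) (by positivity)]; ring_nf
  -- step 3: bound k/d
  have hkub : (k:ℝ)/d ≤ 3 + 2*(L/d)/ε^2 := by
    have hceil : (⌈2*L/ε^2⌉₊ : ℝ) < 2*L/ε^2 + 1 := Nat.ceil_lt_add_one (by positivity)
    have hkub' : (k:ℝ) ≤ (d:ℝ) + 2*L/ε^2 + 2 := by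
      rw [hkdef]; push_cast; linarith
    rw [div_le_iff₀ hd0']
    have h1d : (1:ℝ) ≤ d := by exact_mod_cast hd0
    have key : 2*(L/d)/ε^2 * d = 2*L/ε^2 := by field_simp
    nlinarith
  -- step 4: solve the self-referential inequality
  set u := L/(d:ℝ) with hudef
  clear_value u
  have hu0 : 0 < u := by rw [hudef]; exact div_pos hL0 hd0'
  have hLud : L = u * d := by
    rw [hudef, div_mul_cancel₀]
    exact ne_of_gt hd0'
  have hu : u ≤ 2 + Real.log (3 + 2*u/ε^2) := by
    have hlog : Real.log ((k:ℝ)/d) ≤ Real.log (3 + 2*u/ε^2) :=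
      Real.log_le_log (div_pos hk0' hd0') hkub
    have h2 : L ≤ (d:ℝ) * (2 + Real.log (3 + 2*u/ε^2)) := by nlinarith
    have h3 : u * d ≤ (2 + Real.log (3 + 2*u/ε^2)) * d := by
      rw [← hLud]
      linarith [mul_comm (d:ℝ) (2 + Real.log (3 + 2*u/ε^2))]
    exact le_of_mul_le_mul_right h3 hd0'
  have final : L ≤ 16 * d / ε := by
    rcases le_or_gt u 1 with hu1 | hu1
    · have hLd : L ≤ (d:ℝ) := by
        calc L = u * d := hLud
          _ ≤ 1 * d := mul_le_mul_of_nonneg_right hu1 hd0'.le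
          _ = d := one_mul _
      have h16 : (d:ℝ) ≤ 16*d/ε := by
        rw [le_div_iff₀ hε]
        nlinarith [hd0'.le]
      linarith
    · have hε21 : ε^2 ≤ 1 := by nlinarith
      have huε : u ≤ u/ε^2 := by
        rw [le_div_iff₀ hε2]
        calc u * ε^2 ≤ u * 1 := mul_le_mul_of_nonneg_left hε21 hu0.le
          _ = u := mul_one u
      have h5 : 3 + 2*u/ε^2 ≤ 5*u/ε^2 := by
        have h3u : (3:ℝ) ≤ 3*(u/ε^2) := by nlinarith
        have : 5*u/ε^2 = 3*(u/ε^2) + 2*u/ε^2 := by ring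
        linarith
      have hlog2 : Real.log (3 + 2*u/ε^2) ≤ Real.log (5*u/ε^2) :=
        Real.log_le_log (by positivity) h5
      have hexpand : Real.log (5*u/ε^2) = Real.log 5 + Real.log u - 2 * Real.log ε := by
        rw [Real.log_div (by positivity) (by positivity), Real.log_mul (by norm_num) (ne_of_gt hu0),
          Real.log_pow]
        push_cast; ring
      have hlogu : Real.log u ≤ u/2 + Real.log 2 - 1 := by
        have h := Real.log_le_sub_one_of_pos (show (0:ℝ) < u/2 by positivity)
        have : Real.log (u/2) = Real.log u - Real.log 2 :=
          Real.log_div (ne_of_gt hu0) (by norm_num)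
        linarith
      have hloge : -Real.log ε ≤ 1/ε := by
        have h := Real.log_le_sub_one_of_pos (show (0:ℝ) < 1/ε by positivity)
        have : Real.log (1/ε) = -Real.log ε := by rw [one_div, Real.log_inv]
        have h1ε : 0 < 1/ε := by positivity
        linarith
      have hlog5 : Real.log 5 ≤ 4 := by
        have := Real.log_le_sub_one_of_pos (show (0:ℝ) < 5 by norm_num); linarith
      have hlogtwo : Real.log 2 ≤ 1 := by
        have := Real.log_le_sub_one_of_pos (show (0:ℝ) < 2 by norm_num); linarith
      have hub : u ≤ 6 + u/2 + 2/ε := by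
        have := hu.trans (by linarith : 2 + Real.log (3 + 2*u/ε^2) ≤ 2 + (Real.log 5 + Real.log u - 2*Real.log ε))
        have h2e : -2 * Real.log ε ≤ 2/ε := by
          have : 2/ε = 2*(1/ε) := by ring
          nlinarith
        linarith
      have h6ε : (6:ℝ) ≤ 6/ε := by
        rw [le_div_iff₀ hε]; nlinarith
      have h2ε : 2/ε ≤ 2/ε := le_rfl
      have hu16 : u ≤ 16/ε := by
        have : u/2 ≤ 6 + 2/ε := by linarith
        have : u/2 ≤ 6/ε + 2/ε := by linarith
        have h8 : 6/ε + 2/ε = 8/ε := by ring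
        have : u ≤ 16/ε := by
          rw [h8] at this
          have h16 : (16:ℝ)/ε = 2*(8/ε) := by ring
          linarith
        exact this
      rw [hLud]
      calc u * d ≤ (16/ε) * d := by nlinarith
        _ = 16 * d / ε := by ring
  rw [← Real.exp_log hN0, ← hLdef]
  calc Real.exp L ≤ Real.exp (16*d/ε) := Real.exp_le_exp.mpr final
    _ ≤ (2:ℝ) ^ (2*(16*d/ε)) := exp_le_two_rpow (by positivity)
    _ ≤ (2:ℝ) ^ ((50:ℝ)*d/ε) := by
        apply Real.rpow_le_rpow_of_exponent_le (by norm_num)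
        have : 2 * (16 * (d:ℝ) / ε) = 32 * d / ε := by ring
        rw [this, div_le_div_iff₀ hε hε]
        nlinarith [Nat.cast_nonneg (α := ℝ) d]

lemma trace_bound {X : Type} [DecidableEq X] {H : Set (X → Bool)} {d : ℕ}
    (hVC : VCDimLE H d) (B : Finset X) (𝒯 : Finset (Finset X))
    (h𝒯 : ∀ u ∈ 𝒯, u ⊆ B ∧ ∃ h ∈ H, ∀ x ∈ B, (x ∈ u ↔ h x = true)) :
    𝒯.card ≤ ∑ i ∈ range (d+1), B.card.choose i := by
  classical
  refine (Finset.card_le_card_shatterer 𝒯).trans ?_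
  have hsub : 𝒯.shatterer ⊆ (range (d+1)).biUnion (fun i => B.powersetCard i) := by
    intro s hs
    rw [Finset.mem_shatterer] at hs
    have hsB : s ⊆ B := by
      obtain ⟨t, ht, hst⟩ := hs.exists_superset
      exact hst.trans (h𝒯 t ht).1
    have hshat : ShattersSet H s := by
      intro f
      have ht : s.filter (fun x => f x = true) ⊆ s := filter_subset _ _
      obtain ⟨u, hu𝒯, hsu⟩ := hs ht
      obtain ⟨huB, h, hH, hh⟩ := h𝒯 u hu𝒯
      refine ⟨h, hH, fun x hx => ?_⟩
      rw [← Bool.coe_iff_coe]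
      constructor
      · intro hhx
        have hxu : x ∈ u := (hh x (hsB hx)).mpr hhx
        have : x ∈ s ∩ u := mem_inter.mpr ⟨hx, hxu⟩
        rw [hsu, mem_filter] at this
        exact this.2
      · intro hfx
        have : x ∈ s ∩ u := by rw [hsu, mem_filter]; exact ⟨hx, hfx⟩
        exact (hh x (hsB hx)).mp (mem_inter.mp this).2
    have hcard : s.card ≤ d := hVC s hshat
    rw [mem_biUnion]
    exact ⟨s.card, mem_range.mpr (Nat.lt_succ_of_le hcard), mem_powersetCard.mpr ⟨hsB, rfl⟩⟩
  calc 𝒯.shatterer.card ≤ ((range (d+1)).biUnion (fun i => B.powersetCard i)).card :=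
        card_le_card hsub
    _ ≤ ∑ i ∈ range (d+1), (B.powersetCard i).card := card_biUnion_le
    _ = ∑ i ∈ range (d+1), B.card.choose i := by
        apply Finset.sum_congr rfl; intro i _; exact card_powersetCard i B


lemma exists_sep {X : Type} [DecidableEq X] (A : Finset X) (hA : A.Nonempty)
    (ε : ℝ) (P : Finset (Finset X)) (hPA : ∀ S ∈ P, S ⊆ A)
    (hsep : ∀ S ∈ P, ∀ S' ∈ P, S ≠ S' →
      ε^2 * A.card < (((S \ S') ∪ (S' \ S)).card : ℝ))
    (k : ℕ) (hcount : ((P.card:ℝ))^2 * (1-ε^2)^k < 1) (hε1 : ε ≤ 1) (hε : 0 < ε) :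
    ∃ B : Finset X, B ⊆ A ∧ B.card ≤ k ∧
      ∀ S ∈ P, ∀ S' ∈ P, S ∩ B = S' ∩ B → S = S' := by
  classical
  set m := A.card with hm
  have hm0 : 0 < m := card_pos.mpr hA
  -- the "bad" sets of sample functions
  set Δ : Finset X × Finset X → Finset X := fun p => (p.1 \ p.2) ∪ (p.2 \ p.1) with hΔ
  set bad : Finset X × Finset X → Finset (Fin k → {x // x ∈ A}) := fun p =>
    Fintype.piFinset (fun _ : Fin k => Finset.univ.filter (fun a : {x // x ∈ A} => (a:X) ∉ Δ p)) with hbad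
  have hbadcard : ∀ p ∈ P.offDiag, ((bad p).card : ℝ) ≤ ((m:ℝ) * (1-ε^2))^k := by
    intro p hp
    obtain ⟨hp1, hp2, hp12⟩ := Finset.mem_offDiag.mp hp
    have hΔA : Δ p ⊆ A := by
      intro x hx
      rcases mem_union.mp hx with h | h
      · exact hPA p.1 hp1 (mem_sdiff.mp h).1
      · exact hPA p.2 hp2 (mem_sdiff.mp h).1
    have hD : ε^2 * m < ((Δ p).card : ℝ) := hsep p.1 hp1 p.2 hp2 hp12
    have hfilter : (Finset.univ.filter (fun a : {x // x ∈ A} => (a:X) ∉ Δ p)).card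
        = m - (Δ p).card := by
      have himg : (Finset.univ.filter (fun a : {x // x ∈ A} => (a:X) ∉ Δ p)).image
          (fun a : {x // x ∈ A} => (a:X)) = A \ Δ p := by
        ext x
        simp only [mem_image, mem_filter, mem_univ, true_and, mem_sdiff]
        constructor
        · rintro ⟨a, ha, rfl⟩; exact ⟨a.2, ha⟩
        · rintro ⟨hxA, hxΔ⟩; exact ⟨⟨x, hxA⟩, hxΔ, rfl⟩
      have hinj : Set.InjOn (fun a : {x // x ∈ A} => (a:X))
          ((Finset.univ.filter (fun a : {x // x ∈ A} => (a:X) ∉ Δ p)) : Set {x // x ∈ A}) :=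
        fun a _ b _ hab => Subtype.ext hab
      rw [← card_image_of_injOn hinj, himg, card_sdiff_of_subset hΔA]
    have hcard : (bad p).card = (m - (Δ p).card)^k := by
      rw [hbad]
      rw [Fintype.card_piFinset, Finset.prod_const, hfilter]
      simp
    rw [hcard]
    have hΔm : (Δ p).card ≤ m := card_le_card hΔA
    have h1 : ((m - (Δ p).card : ℕ) : ℝ) ≤ (m:ℝ) * (1-ε^2) := by
      have : ((m - (Δ p).card : ℕ) : ℝ) = (m:ℝ) - (Δ p).card := by
        push_cast [Nat.cast_sub hΔm]; ring
      rw [this]; nlinarith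
    calc (((m - (Δ p).card)^k : ℕ) : ℝ) = ((m - (Δ p).card : ℕ) : ℝ)^k := by push_cast; ring
      _ ≤ ((m:ℝ) * (1-ε^2))^k := by
          apply pow_le_pow_left₀ (by positivity) h1
  -- total bad count is less than total count
  have htotal : ((P.offDiag.biUnion bad).card : ℝ) < (Fintype.card (Fin k → {x // x ∈ A}) : ℝ) := by
    have h1 : ((P.offDiag.biUnion bad).card : ℝ) ≤ ∑ p ∈ P.offDiag, ((bad p).card : ℝ) := by
      exact_mod_cast (Nat.cast_le.mpr (card_biUnion_le))
    have h2 : ∑ p ∈ P.offDiag, ((bad p).card : ℝ) ≤ (P.card:ℝ)^2 * ((m:ℝ) * (1-ε^2))^k := by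
      calc ∑ p ∈ P.offDiag, ((bad p).card : ℝ) ≤ ∑ p ∈ P.offDiag, ((m:ℝ) * (1-ε^2))^k :=
            Finset.sum_le_sum hbadcard
        _ = P.offDiag.card * ((m:ℝ) * (1-ε^2))^k := by rw [Finset.sum_const, nsmul_eq_mul]
        _ ≤ (P.card:ℝ)^2 * ((m:ℝ) * (1-ε^2))^k := by
            apply mul_le_mul_of_nonneg_right ?_
              (pow_nonneg (mul_nonneg (Nat.cast_nonneg m) (by nlinarith)) k)
            have hod : P.offDiag.card ≤ P.card^2 := by
              rw [Finset.offDiag_card, pow_two]; exact Nat.sub_le _ _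
            exact_mod_cast hod
    have h3 : (Fintype.card (Fin k → {x // x ∈ A}) : ℝ) = (m:ℝ)^k := by
      rw [Fintype.card_fun]
      simp [hm, Fintype.card_coe]
    rw [h3]
    have h01 : (0:ℝ) ≤ 1 - ε^2 := by nlinarith
    have : (P.card:ℝ)^2 * ((m:ℝ) * (1-ε^2))^k = ((P.card:ℝ)^2 * (1-ε^2)^k) * (m:ℝ)^k := by
      rw [mul_pow]; ring
    have hmk : (0:ℝ) < (m:ℝ)^k := by positivity
    nlinarith
  -- pick a good sample
  have hne : ((Finset.univ : Finset (Fin k → {x // x ∈ A})) \ P.offDiag.biUnion bad).Nonempty := by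
    rw [← Finset.card_pos, Finset.card_sdiff_of_subset (Finset.subset_univ _), Finset.card_univ]
    have : (P.offDiag.biUnion bad).card < Fintype.card (Fin k → {x // x ∈ A}) := by exact_mod_cast htotal
    omega
  obtain ⟨f, hf⟩ := hne
  rw [Finset.mem_sdiff] at hf
  refine ⟨Finset.image (fun i => ((f i):X)) Finset.univ, ?_, ?_, ?_⟩
  · intro x hx
    obtain ⟨i, _, rfl⟩ := mem_image.mp hx
    exact (f i).2
  · exact (card_image_le).trans (by simp)
  · intro S hS S' hS' hint
    by_contra hne'
    have hp : (S, S') ∈ P.offDiag := Finset.mem_offDiag.mpr ⟨hS, hS', hne'⟩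
    have : f ∈ bad (S, S') := by
      rw [hbad, Fintype.mem_piFinset]
      intro i
      rw [mem_filter]
      refine ⟨mem_univ _, fun hmem => ?_⟩
      -- f i lands in the symmetric difference: contradiction with S ∩ B = S' ∩ B
      have hxB : ((f i):X) ∈ Finset.image (fun i => ((f i):X)) Finset.univ :=
        mem_image.mpr ⟨i, mem_univ _, rfl⟩
      rcases mem_union.mp hmem with h | h
      · obtain ⟨h1, h2⟩ := mem_sdiff.mp h
        have : ((f i):X) ∈ S' ∩ _ := hint ▸ (mem_inter.mpr ⟨h1, hxB⟩)
        exact h2 (mem_inter.mp this).1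
      · obtain ⟨h1, h2⟩ := mem_sdiff.mp h
        have : ((f i):X) ∈ S ∩ _ := hint.symm ▸ (mem_inter.mpr ⟨h1, hxB⟩)
        exact h2 (mem_inter.mp this).1
    exact absurd (Finset.mem_biUnion.mpr ⟨(S,S'), hp, this⟩) hf.2


lemma exists_packing {X : Type} [DecidableEq X] (𝒜 : Finset (Finset X)) (r : ℝ) (hr : 0 ≤ r) :
    ∃ P, P ⊆ 𝒜 ∧ (∀ S ∈ P, ∀ S' ∈ P, S ≠ S' → r < (((S \ S') ∪ (S' \ S)).card : ℝ)) ∧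
      ∀ S ∈ 𝒜, ∃ S' ∈ P, (((S \ S') ∪ (S' \ S)).card : ℝ) ≤ r := by
  classical
  set good := 𝒜.powerset.filter
    (fun Q => ∀ S ∈ Q, ∀ S' ∈ Q, S ≠ S' → r < (((S \ S') ∪ (S' \ S)).card : ℝ)) with hgood
  have hempty : (∅ : Finset (Finset X)) ∈ good := by
    rw [hgood, mem_filter]
    exact ⟨mem_powerset.mpr (empty_subset _), by simp⟩
  obtain ⟨P, hPgood, hPmax⟩ := Finset.exists_max_image good card ⟨∅, hempty⟩
  rw [hgood, mem_filter, mem_powerset] at hPgood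
  obtain ⟨hP𝒜, hsep⟩ := hPgood
  refine ⟨P, hP𝒜, hsep, ?_⟩
  intro S hS
  by_cases hSP : S ∈ P
  · exact ⟨S, hSP, by simp [hr]⟩
  · by_contra hcon
    push_neg at hcon
    have hins : insert S P ∈ good := by
      rw [hgood, mem_filter, mem_powerset]
      refine ⟨insert_subset hS hP𝒜, ?_⟩
      intro a ha b hb hab
      rcases mem_insert.mp ha with rfl | haP
      · rcases mem_insert.mp hb with rfl | hbP
        · exact absurd rfl hab
        · exact hcon b hbP
      · rcases mem_insert.mp hb with rfl | hbP
        · rw [union_comm]; exact hcon a haP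
        · exact hsep a haP b hbP hab
    have := hPmax _ hins
    rw [card_insert_of_notMem hSP] at this
    omega


set_option maxHeartbeats 1000000 in
/-- Haussler's covering bound: a class of VC dimension `d` admits, on every finite
set `A` of size `m` and every scale `ε ∈ (0,1]`, an `ε`-cover in `L²(uniform on A)`
by `[0,1]`-valued functions of size at most `2^{O(d/ε)}`. -/
theorem haussler_covering :
    ∃ C : ℝ, 0 < C ∧
      ∀ (X : Type) (H : Set (X → Bool)) (d : ℕ), VCDimLE H d →
        ∀ A : Finset X, A.Nonempty → ∀ ε : ℝ, 0 < ε → ε ≤ 1 →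
          ∃ T : Finset (X → ℝ),
            (T.card : ℝ) ≤ 2 ^ (C * d / ε) ∧
            (∀ g ∈ T, ∀ x, g x ∈ Set.Icc (0 : ℝ) 1) ∧
            ∀ h ∈ H, ∃ g ∈ T,
              (∑ x ∈ A, ((if h x then (1 : ℝ) else 0) - g x) ^ 2) / A.card ≤ ε ^ 2 := by
  classical
  refine ⟨50, by norm_num, ?_⟩
  intro X H d hVC A hA ε hε hε1
  classical
  have hm0 : 0 < A.card := card_pos.mpr hA
  have hm0' : (0:ℝ) < A.card := by exact_mod_cast hm0
  set 𝒜 := A.powerset.filter (fun S => ∃ h ∈ H, S = A.filter (fun x => h x = true)) with h𝒜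
  obtain ⟨P, hP𝒜, hsep, hcover⟩ := exists_packing 𝒜 (ε^2 * A.card) (by positivity)
  have hPA : ∀ S ∈ P, S ⊆ A := fun S hS => mem_powerset.mp (mem_filter.mp (hP𝒜 hS)).1
  have hPbound : (P.card : ℝ) ≤ 2 ^ ((50:ℝ)*d/ε) := by
    apply key_numeric d P.card ε hε hε1
    intro k hk
    obtain ⟨B, hBA, hBk, hinj⟩ := exists_sep A hA ε P hPA
      (fun S hS S' hS' hne => hsep S hS S' hS' hne) k hk hε1 hε
    have hinj' : Set.InjOn (· ∩ B) (P : Set (Finset X)) :=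
      fun S hS S' hS' hSS' => hinj S hS S' hS' hSS'
    have hcard : P.card = (P.image (· ∩ B)).card := (card_image_of_injOn hinj').symm
    have htr : (P.image (· ∩ B)).card ≤ ∑ i ∈ range (d+1), B.card.choose i := by
      apply trace_bound hVC B
      intro u hu
      obtain ⟨S, hSP, rfl⟩ := mem_image.mp hu
      have hS𝒜 := hP𝒜 hSP
      rw [h𝒜, mem_filter] at hS𝒜
      obtain ⟨hSpow, h, hH, hSh⟩ := hS𝒜
      refine ⟨inter_subset_right, h, hH, ?_⟩
      intro x hxB
      rw [hSh]
      simp [mem_inter, mem_filter, hxB, hBA hxB]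
    have hle : P.card ≤ ∑ i ∈ range (d+1), k.choose i := by
      rw [hcard]
      exact htr.trans (Finset.sum_le_sum (fun i _ => Nat.choose_le_choose i hBk))
    calc (P.card : ℝ) ≤ ((∑ i ∈ range (d+1), k.choose i : ℕ) : ℝ) := by exact_mod_cast hle
      _ = ∑ i ∈ range (d+1), (k.choose i : ℝ) := by push_cast; rfl
  refine ⟨P.image (fun S => fun x => if x ∈ S then (1:ℝ) else 0), ?_, ?_, ?_⟩
  · exact le_trans (Nat.cast_le.mpr card_image_le) hPbound
  · intro g hg x
    obtain ⟨S, hS, rfl⟩ := mem_image.mp hg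
    by_cases hx : x ∈ S <;> simp [hx]
  · intro h hH
    set Sh := A.filter (fun x => h x = true) with hSh
    have hSh𝒜 : Sh ∈ 𝒜 := by
      rw [h𝒜, mem_filter]
      exact ⟨mem_powerset.mpr (filter_subset _ _), h, hH, rfl⟩
    obtain ⟨S, hSP, hdist⟩ := hcover Sh hSh𝒜
    refine ⟨_, mem_image_of_mem _ hSP, ?_⟩
    have hSA : S ⊆ A := hPA S hSP
    have hΔA : (Sh \ S) ∪ (S \ Sh) ⊆ A :=
      union_subset ((sdiff_subset).trans (filter_subset _ _)) ((sdiff_subset).trans hSA)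
    have hsum : (∑ x ∈ A, ((if h x then (1 : ℝ) else 0) - (if x ∈ S then (1:ℝ) else 0)) ^ 2)
        = (((Sh \ S) ∪ (S \ Sh)).card : ℝ) := by
      have hpt : ∀ x ∈ A, ((if h x then (1 : ℝ) else 0) - (if x ∈ S then (1:ℝ) else 0)) ^ 2
          = if x ∈ (Sh \ S) ∪ (S \ Sh) then (1:ℝ) else 0 := by
        intro x hxA
        by_cases hhx : h x <;> by_cases hxS : x ∈ S <;>
          simp [hSh, mem_union, mem_sdiff, mem_filter, hxA, hhx, hxS]
      rw [Finset.sum_congr rfl hpt, Finset.sum_boole]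
      congr 1
      rw [Finset.filter_mem_eq_inter, inter_eq_right.mpr hΔA]
    show (∑ x ∈ A, ((if h x then (1 : ℝ) else 0) - (if x ∈ S then (1:ℝ) else 0)) ^ 2) / A.card ≤ ε ^ 2
    rw [hsum, div_le_iff₀ hm0']
    calc (((Sh \ S) ∪ (S \ Sh)).card : ℝ) ≤ ε^2 * A.card := hdist
      _ = ε^2 * A.card := rfl
end
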